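/- Let r_1,...,r_m be independent uniformly random elements of F_q and let Q be a multilinear homogeneous polynomial of degree k ≤ m over F_q with not all coefficients zero. Then P(Q(r_1,...,r_m) = 0) ≤ 1 − (1 − 1/q)^k. -/

import Mathlib

/-!
Write `Q(x) = xᵢ · ∂ᵢQ(x) + Q(x)|_{xᵢ = 0}`. On each line in direction `i` where `∂ᵢQ ≠ 0`, `Q` is a
nonconstant affine function of `xᵢ`, so `P(Q ≠ 0) ≥ (1 - 1/q) · P(∂ᵢQ ≠ 0)`. If `δ I ≠ 0` and no
coefficient of a proper superset of `I` is nonzero (automatic when `Q` is homogeneous of degree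
`#I`), the same holds for `∂ᵢQ` and `I \ {i}`; differentiating along all of `I` reaches the nonzero
constant `δ I`, whence `P(Q ≠ 0) ≥ (1 - 1/q)^#I`.
-/

open Finset Function

section Multilinear

variable {ι F : Type*} [Fintype ι] [DecidableEq ι] [Field F] [Fintype F] [DecidableEq F]

local notation "q" => Fintype.card F

def multilinearEval (δ : Finset ι → F) (y : ι → F) : F :=
  ∑ I, δ I * ∏ i ∈ I, y i

def pderivCoeff (δ : Finset ι → F) (i : ι) (J : Finset ι) : F :=
  if i ∈ J then 0 else δ (insert i J)

omit [Fintype F] [DecidableEq F] in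
lemma sum_finset_univ_eq_sum_powerset_erase {M : Type*} [AddCommMonoid M]
    (f : Finset ι → M) (i : ι) :
    ∑ I, f I = ∑ J ∈ (univ.erase i).powerset, (f J + f (insert i J)) := by
  rw [← powerset_univ, ← insert_erase (mem_univ i), sum_powerset_insert (notMem_erase i univ),
    erase_insert (notMem_erase i univ), sum_add_distrib]

omit [Fintype F] [DecidableEq F] in
lemma multilinearEval_update (δ : Finset ι → F) (y : ι → F) (i : ι) (t : F) :
    multilinearEval δ (update y i t) =
      t * multilinearEval (pderivCoeff δ i) y + multilinearEval δ (update y i 0) := by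
  simp only [multilinearEval]
  rw [sum_finset_univ_eq_sum_powerset_erase _ i, sum_finset_univ_eq_sum_powerset_erase _ i,
    sum_finset_univ_eq_sum_powerset_erase _ i, mul_sum, ← sum_add_distrib]
  refine sum_congr rfl fun J hJ => ?_
  have hiJ : i ∉ J := fun h => notMem_erase i univ (mem_powerset.mp hJ h)
  have hprod : ∀ s : F, ∏ j ∈ J, update y i s j = ∏ j ∈ J, y j :=
    fun s => prod_congr rfl fun j hj => update_of_ne (ne_of_mem_of_not_mem hj hiJ) _ _
  simp only [prod_insert hiJ, hprod, pderivCoeff, hiJ, mem_insert_self, if_true, if_false,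
    update_self]
  ring

lemma card_filter_mul_add_ne_zero {a : F} (ha : a ≠ 0) (b : F) :
    #{t | t * a + b ≠ 0} = q - 1 := by
  have : ({t | t * a + b ≠ 0} : Finset F) = univ.erase (-b / a) := by
    ext t
    simp [eq_div_iff ha, eq_neg_iff_add_eq_zero]
  rw [this, card_erase_of_mem (mem_univ _), card_univ]

lemma sub_one_mul_card_ne_zero_le_mul_card_ne_zero {f g : (ι → F) → F} (i : ι)
    (hf : ∀ y t, f (update y i t) = t * g y + f (update y i 0)) :
    (q - 1) * #{y | g y ≠ 0} ≤ q * #{y | f y ≠ 0} := by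
  let e : Equiv.Perm ((ι → F) × F) :=
    Involutive.toPerm (fun p => (update p.1 i p.2, p.1 i)) fun p => by simp
  have hlines : ∑ y, #{t | f (update y i t) ≠ 0} = q * #{y | f y ≠ 0} := by
    calc ∑ y, #{t | f (update y i t) ≠ 0}
        = ∑ p : (ι → F) × F, if f (e p).1 ≠ 0 then 1 else 0 := by
          simp only [card_filter, Fintype.sum_prod_type]
          rfl
      _ = ∑ p : (ι → F) × F, if f p.1 ≠ 0 then 1 else 0 :=
          Equiv.sum_comp e fun p => if f p.1 ≠ 0 then 1 else 0
      _ = #(({y | f y ≠ 0} : Finset (ι → F)) ×ˢ (univ : Finset F)) := by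
          rw [← card_filter]
          congr 1
          ext p
          simp
      _ = q * #{y | f y ≠ 0} := by rw [card_product, card_univ, mul_comm]
  calc (q - 1) * #{y | g y ≠ 0}
      = ∑ y with g y ≠ 0, #{t | t * g y + f (update y i 0) ≠ 0} := by
        rw [sum_congr rfl fun y hy => card_filter_mul_add_ne_zero (mem_filter.mp hy).2 _,
          sum_const, smul_eq_mul, mul_comm]
    _ ≤ ∑ y, #{t | f (update y i t) ≠ 0} := by
        simp only [← hf]
        exact sum_le_sum_of_subset (filter_subset _ _)
    _ = q * #{y | f y ≠ 0} := hlines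

lemma sub_one_pow_mul_le_pow_mul_card_eval_ne_zero (δ : Finset ι → F) (I₀ : Finset ι)
    (hI₀ : δ I₀ ≠ 0) (hmax : ∀ J, I₀ ⊂ J → δ J = 0) :
    (q - 1) ^ #I₀ * q ^ Fintype.card ι ≤
      q ^ #I₀ * #{y | multilinearEval δ y ≠ 0} := by
  induction h : #I₀ generalizing δ I₀ with
  | zero =>
    obtain rfl := card_eq_zero.mp h
    have hconst : ∀ y, multilinearEval δ y = δ ∅ := fun y => by
      rw [multilinearEval, sum_eq_single ∅ (fun J _ hJ => by
        rw [hmax J (empty_ssubset.mpr (nonempty_iff_ne_empty.mpr hJ)), zero_mul]) (by simp)]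
      simp
    simp [hconst, hI₀]
  | succ n ih =>
    obtain ⟨i, hi⟩ := card_pos.mp (by omega : 0 < #I₀)
    have hderiv : pderivCoeff δ i (I₀.erase i) ≠ 0 := by
      simpa [pderivCoeff, insert_erase hi] using hI₀
    have hderiv_max : ∀ J, I₀.erase i ⊂ J → pderivCoeff δ i J = 0 := by
      intro J hJ
      unfold pderivCoeff
      split_ifs with hiJ
      · rfl
      · have hsub : I₀ ⊆ insert i J := by
          rw [← insert_erase hi]
          exact insert_subset_insert i hJ.subset
        refine hmax _ (hsub.ssubset_of_ne fun hEq => hJ.ne ?_)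
        rw [hEq, erase_insert hiJ]
    have hA := ih (pderivCoeff δ i) (I₀.erase i) hderiv hderiv_max
      (by rw [card_erase_of_mem hi, h, Nat.add_sub_cancel])
    have hline := sub_one_mul_card_ne_zero_le_mul_card_ne_zero i (multilinearEval_update δ · i ·)
    calc (q - 1) ^ (n + 1) * q ^ Fintype.card ι
        = (q - 1) * ((q - 1) ^ n * q ^ Fintype.card ι) := by
          ring
      _ ≤ (q - 1) *
            (q ^ n * #{y | multilinearEval (pderivCoeff δ i) y ≠ 0}) :=
          Nat.mul_le_mul_left _ hA
      _ = q ^ n *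
            ((q - 1) * #{y | multilinearEval (pderivCoeff δ i) y ≠ 0}) := by
          ring
      _ ≤ q ^ n * (q * #{y | multilinearEval δ y ≠ 0}) :=
          Nat.mul_le_mul_left _ hline
      _ = q ^ (n + 1) * #{y | multilinearEval δ y ≠ 0} := by ring

lemma card_eval_eq_zero_div_le (δ : Finset ι → F) (I₀ : Finset ι)
    (hI₀ : δ I₀ ≠ 0) (hmax : ∀ J, I₀ ⊂ J → δ J = 0) :
    (#{y | multilinearEval δ y = 0} : ℝ) / (q : ℝ) ^ Fintype.card ι ≤
      1 - (1 - 1 / (q : ℝ)) ^ #I₀ := by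
  have hq1 : 1 ≤ q := Fintype.card_pos
  have hq : (0 : ℝ) < q := by exact_mod_cast hq1
  have hcompl := card_filter_add_card_filter_not (s := univ) (fun y => multilinearEval δ y = 0)
  rw [card_univ, Fintype.card_fun] at hcompl
  have hbound : ((q : ℝ) - 1) ^ #I₀ * (q : ℝ) ^ Fintype.card ι ≤
      (q : ℝ) ^ #I₀ * #{y | multilinearEval δ y ≠ 0} := by
    have := (Nat.cast_le (α := ℝ)).mpr (sub_one_pow_mul_le_pow_mul_card_eval_ne_zero δ I₀ hI₀ hmax)
    push_cast [Nat.cast_sub hq1] at this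
    exact this
  calc (#{y | multilinearEval δ y = 0} : ℝ) / (q : ℝ) ^ Fintype.card ι
      = 1 - #{y | multilinearEval δ y ≠ 0} / (q : ℝ) ^ Fintype.card ι := by
        rw [eq_sub_iff_add_eq, ← add_div, ← Nat.cast_add, hcompl, Nat.cast_pow,
          div_self (by positivity)]
    _ ≤ 1 - (1 - 1 / (q : ℝ)) ^ #I₀ := by
        refine sub_le_sub_left ?_ 1
        rw [one_sub_div hq.ne', div_pow, div_le_div_iff₀ (by positivity) (by positivity)]
        linarith

end Multilinear

theorem prob_zero_upper_general (F : Type) [Field F] [Fintype F] [DecidableEq F]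
    (q : ℕ) (hq : q = Fintype.card F)
    (m k : ℕ)
    (δ : Finset (Fin m) → F)
    (hδ : ∃ I : Finset (Fin m), I.card = k ∧ δ I ≠ 0) :
    ((Finset.univ.filter (fun y : Fin m → F =>
        ∑ I ∈ Finset.univ.filter (fun I : Finset (Fin m) => I.card = k),
          δ I * ∏ i ∈ I, y i = 0)).card : ℝ) / (q : ℝ) ^ m
      ≤ 1 - (1 - 1 / (q : ℝ)) ^ k := by
  obtain ⟨I₀, hI₀k, hI₀⟩ := hδ
  let δk : Finset (Fin m) → F := fun I => if #I = k then δ I else 0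
  have hQ (y : Fin m → F) : ∑ I with #I = k, δ I * ∏ i ∈ I, y i = multilinearEval δk y := by
    simp only [multilinearEval, δk, sum_filter, ite_mul, zero_mul]
  have hbound := card_eval_eq_zero_div_le δk I₀ (by simp [δk, hI₀k, hI₀])
    fun J hJ => if_neg (by have := card_lt_card hJ; omega)
  subst hq
  simpa only [hQ, hI₀k, Fintype.card_fin] using hbound

/-- For i.i.d. uniform `r₁,…,r_m` in `F_q` and a nonzero multilinear homogeneous
polynomial `Q` of degree `k ≤ m`, `P(Q(r) = 0) = #Z/q^m ≤ 1 − (1 − 1/q)^k`. -/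
theorem prob_zero_upper (F : Type) [Field F] [Fintype F] [DecidableEq F]
    (q : ℕ) (hq : q = Fintype.card F)
    (m k : ℕ) (hk : 1 ≤ k) (hkm : k ≤ m)
    (δ : Finset (Fin m) → F)
    (hδ : ∃ I : Finset (Fin m), I.card = k ∧ δ I ≠ 0) :
    ((Finset.univ.filter (fun y : Fin m → F =>
        ∑ I ∈ Finset.univ.filter (fun I : Finset (Fin m) => I.card = k),
          δ I * ∏ i ∈ I, y i = 0)).card : ℝ) / (q : ℝ) ^ m
      ≤ 1 - (1 - 1 / (q : ℝ)) ^ k :=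
  prob_zero_upper_general F q hq m k δ hδ
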